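/- Let k be a field with char k ≥ 23. Then the matrix e lies in V, e is nilpotent, λ̌(t) e λ̌(t)⁻¹ = t·e for all t ∈ kˣ, and the centralizer {x ∈ so₈(k) : [x, e] = 0} has dimension 6 over k (i.e., e is a subregular nilpotent element of so₈(k)). -/
import Mathlib

open Matrix

set_option maxHeartbeats 2000000

noncomputable section

/-- The 8×8 matrix `Ψ`, block diagonal with two anti-diagonal 4×4 blocks. -/
def Psi (k : Type*) [Field k] : Matrix (Fin 8) (Fin 8) k :=
  !![0,0,0,1,0,0,0,0;
     0,0,1,0,0,0,0,0;
     0,1,0,0,0,0,0,0;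
     1,0,0,0,0,0,0,0;
     0,0,0,0,0,0,0,1;
     0,0,0,0,0,0,1,0;
     0,0,0,0,0,1,0,0;
     0,0,0,0,1,0,0,0]

/-- The matrix `s = diag(1,−1,−1,1,1,−1,−1,1)`. -/
def sMat (k : Type*) [Field k] : Matrix (Fin 8) (Fin 8) k :=
  Matrix.diagonal ![1,-1,-1,1,1,-1,-1,1]

/-- `so₈(k) = {v : vᵀΨ = −Ψv}`. -/
def so8Set (k : Type*) [Field k] : Set (Matrix (Fin 8) (Fin 8) k) :=
  {v | vᵀ * Psi k = -(Psi k * v)}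

/-- The `(−1)`-eigenspace `V` of `θ(v) = svs` on `so₈(k)`. -/
def VSet (k : Type*) [Field k] : Set (Matrix (Fin 8) (Fin 8) k) :=
  {v | vᵀ * Psi k = -(Psi k * v) ∧ sMat k * v * sMat k = -v}

/-- `so₈(k)` as a `k`-submodule of the 8×8 matrices. -/
def so8Sub (k : Type*) [Field k] : Submodule k (Matrix (Fin 8) (Fin 8) k) where
  carrier := so8Set k
  add_mem' := by
    intro a b ha hb
    simp only [so8Set, Set.mem_setOf_eq] at *
    rw [Matrix.transpose_add, Matrix.add_mul, ha, hb, Matrix.mul_add, neg_add]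
  zero_mem' := by simp [so8Set]
  smul_mem' := by
    intro c a ha
    simp only [so8Set, Set.mem_setOf_eq] at *
    rw [Matrix.transpose_smul, Matrix.smul_mul, ha, Matrix.mul_smul, smul_neg]

/-- `V` as a `k`-submodule of the 8×8 matrices. -/
def VSubm (k : Type*) [Field k] : Submodule k (Matrix (Fin 8) (Fin 8) k) where
  carrier := VSet k
  add_mem' := by
    intro a b ha hb
    obtain ⟨ha1, ha2⟩ := ha
    obtain ⟨hb1, hb2⟩ := hb
    constructor
    · rw [Matrix.transpose_add, Matrix.add_mul, ha1, hb1, Matrix.mul_add, neg_add]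
    · rw [Matrix.mul_add, Matrix.add_mul, ha2, hb2, neg_add]
  zero_mem' := by constructor <;> simp
  smul_mem' := by
    intro c a ha
    obtain ⟨ha1, ha2⟩ := ha
    constructor
    · rw [Matrix.transpose_smul, Matrix.smul_mul, ha1, Matrix.mul_smul, smul_neg]
    · rw [Matrix.mul_smul, Matrix.smul_mul, ha2, smul_neg]

/-- The subspace of matrices commuting with a fixed matrix `F`. -/
def commSub (k : Type*) [Field k] (F : Matrix (Fin 8) (Fin 8) k) :
    Submodule k (Matrix (Fin 8) (Fin 8) k) where
  carrier := {x | x * F = F * x}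
  add_mem' := by
    intro a b ha hb
    simp only [Set.mem_setOf_eq] at *
    rw [Matrix.add_mul, Matrix.mul_add, ha, hb]
  zero_mem' := by simp
  smul_mem' := by
    intro c a ha
    simp only [Set.mem_setOf_eq] at *
    rw [Matrix.smul_mul, Matrix.mul_smul, ha]


/-- The subregular nilpotent element `e`. -/
def emat (k : Type*) [Field k] : Matrix (Fin 8) (Fin 8) k :=
  !![0,1,0,0,0,1,0,0;
     0,0,0,0,1,0,0,2;
     0,0,0,-1,0,0,0,0;
     0,0,0,0,0,0,0,0;
     0,0,-2,0,0,0,1,0;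
     0,0,0,0,1,0,0,-1;
     0,0,0,-1,0,0,0,0;
     0,0,-1,0,0,0,-1,0]

/-- The cocharacter `λ̌(t) = diag(t², t, t⁻¹, t⁻², 1, t, t⁻¹, 1)`. -/
def lam (k : Type*) [Field k] (t : k) : Matrix (Fin 8) (Fin 8) k :=
  Matrix.diagonal ![t^2, t, t⁻¹, (t⁻¹)^2, 1, t, t⁻¹, 1]

-- ===== auxiliary definitions =====
def E2mat (k : Type*) [Field k] : Matrix (Fin 8) (Fin 8) k :=
  !![0,0,0,0,2,0,0,1;
     0,0,-4,0,0,0,-1,0;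
     0,0,0,0,0,0,0,0;
     0,0,0,0,0,0,0,0;
     0,0,0,1,0,0,0,0;
     0,0,-1,0,0,0,2,0;
     0,0,0,0,0,0,0,0;
     0,0,0,2,0,0,0,0]
def E3mat (k : Type*) [Field k] : Matrix (Fin 8) (Fin 8) k :=
  !![0,0,-5,0,0,0,1,0;
     0,0,0,5,0,0,0,0;
     0,0,0,0,0,0,0,0;
     0,0,0,0,0,0,0,0;
     0,0,0,0,0,0,0,0;
     0,0,0,-1,0,0,0,0;
     0,0,0,0,0,0,0,0;
     0,0,0,0,0,0,0,0]
def E4mat (k : Type*) [Field k] : Matrix (Fin 8) (Fin 8) k :=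
  !![0,0,0,4,0,0,0,0;
     0,0,0,0,0,0,0,0;
     0,0,0,0,0,0,0,0;
     0,0,0,0,0,0,0,0;
     0,0,0,0,0,0,0,0;
     0,0,0,0,0,0,0,0;
     0,0,0,0,0,0,0,0;
     0,0,0,0,0,0,0,0]
def Cmat (k : Type*) [Field k] (a b c u h g : k) : Matrix (Fin 8) (Fin 8) k :=
  !![0,-2*c - 2*u - g,-a,0,-2*h,-c,-b,h;
     0,0,0,a,-3*c - 2*u,0,-3*h,-3*c - 3*u - 2*g;
     0,0,0,2*c + 2*u + g,0,0,0,0;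
     0,0,0,0,0,0,0,0;
     0,0,3*c + 3*u + 2*g,-h,0,0,u,0;
     0,0,3*h,b,-g,0,0,-u;
     0,0,0,c,0,0,0,0;
     0,0,3*c + 2*u,2*h,0,0,g,0]

-- ===== entry lemmas =====
section EntryLemmas
variable (k : Type*) [Field k]
@[simp] lemma PsiE00 : Psi k 0 0 = 0 := rfl
@[simp] lemma PsiE01 : Psi k 0 1 = 0 := rfl
@[simp] lemma PsiE02 : Psi k 0 2 = 0 := rfl
@[simp] lemma PsiE03 : Psi k 0 3 = 1 := rfl
@[simp] lemma PsiE04 : Psi k 0 4 = 0 := rfl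
@[simp] lemma PsiE05 : Psi k 0 5 = 0 := rfl
@[simp] lemma PsiE06 : Psi k 0 6 = 0 := rfl
@[simp] lemma PsiE07 : Psi k 0 7 = 0 := rfl
@[simp] lemma PsiE10 : Psi k 1 0 = 0 := rfl
@[simp] lemma PsiE11 : Psi k 1 1 = 0 := rfl
@[simp] lemma PsiE12 : Psi k 1 2 = 1 := rfl
@[simp] lemma PsiE13 : Psi k 1 3 = 0 := rfl
@[simp] lemma PsiE14 : Psi k 1 4 = 0 := rfl
@[simp] lemma PsiE15 : Psi k 1 5 = 0 := rfl
@[simp] lemma PsiE16 : Psi k 1 6 = 0 := rfl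
@[simp] lemma PsiE17 : Psi k 1 7 = 0 := rfl
@[simp] lemma PsiE20 : Psi k 2 0 = 0 := rfl
@[simp] lemma PsiE21 : Psi k 2 1 = 1 := rfl
@[simp] lemma PsiE22 : Psi k 2 2 = 0 := rfl
@[simp] lemma PsiE23 : Psi k 2 3 = 0 := rfl
@[simp] lemma PsiE24 : Psi k 2 4 = 0 := rfl
@[simp] lemma PsiE25 : Psi k 2 5 = 0 := rfl
@[simp] lemma PsiE26 : Psi k 2 6 = 0 := rfl
@[simp] lemma PsiE27 : Psi k 2 7 = 0 := rfl
@[simp] lemma PsiE30 : Psi k 3 0 = 1 := rfl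
@[simp] lemma PsiE31 : Psi k 3 1 = 0 := rfl
@[simp] lemma PsiE32 : Psi k 3 2 = 0 := rfl
@[simp] lemma PsiE33 : Psi k 3 3 = 0 := rfl
@[simp] lemma PsiE34 : Psi k 3 4 = 0 := rfl
@[simp] lemma PsiE35 : Psi k 3 5 = 0 := rfl
@[simp] lemma PsiE36 : Psi k 3 6 = 0 := rfl
@[simp] lemma PsiE37 : Psi k 3 7 = 0 := rfl
@[simp] lemma PsiE40 : Psi k 4 0 = 0 := rfl
@[simp] lemma PsiE41 : Psi k 4 1 = 0 := rfl
@[simp] lemma PsiE42 : Psi k 4 2 = 0 := rfl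
@[simp] lemma PsiE43 : Psi k 4 3 = 0 := rfl
@[simp] lemma PsiE44 : Psi k 4 4 = 0 := rfl
@[simp] lemma PsiE45 : Psi k 4 5 = 0 := rfl
@[simp] lemma PsiE46 : Psi k 4 6 = 0 := rfl
@[simp] lemma PsiE47 : Psi k 4 7 = 1 := rfl
@[simp] lemma PsiE50 : Psi k 5 0 = 0 := rfl
@[simp] lemma PsiE51 : Psi k 5 1 = 0 := rfl
@[simp] lemma PsiE52 : Psi k 5 2 = 0 := rfl
@[simp] lemma PsiE53 : Psi k 5 3 = 0 := rfl
@[simp] lemma PsiE54 : Psi k 5 4 = 0 := rfl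
@[simp] lemma PsiE55 : Psi k 5 5 = 0 := rfl
@[simp] lemma PsiE56 : Psi k 5 6 = 1 := rfl
@[simp] lemma PsiE57 : Psi k 5 7 = 0 := rfl
@[simp] lemma PsiE60 : Psi k 6 0 = 0 := rfl
@[simp] lemma PsiE61 : Psi k 6 1 = 0 := rfl
@[simp] lemma PsiE62 : Psi k 6 2 = 0 := rfl
@[simp] lemma PsiE63 : Psi k 6 3 = 0 := rfl
@[simp] lemma PsiE64 : Psi k 6 4 = 0 := rfl
@[simp] lemma PsiE65 : Psi k 6 5 = 1 := rfl
@[simp] lemma PsiE66 : Psi k 6 6 = 0 := rfl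
@[simp] lemma PsiE67 : Psi k 6 7 = 0 := rfl
@[simp] lemma PsiE70 : Psi k 7 0 = 0 := rfl
@[simp] lemma PsiE71 : Psi k 7 1 = 0 := rfl
@[simp] lemma PsiE72 : Psi k 7 2 = 0 := rfl
@[simp] lemma PsiE73 : Psi k 7 3 = 0 := rfl
@[simp] lemma PsiE74 : Psi k 7 4 = 1 := rfl
@[simp] lemma PsiE75 : Psi k 7 5 = 0 := rfl
@[simp] lemma PsiE76 : Psi k 7 6 = 0 := rfl
@[simp] lemma PsiE77 : Psi k 7 7 = 0 := rfl
@[simp] lemma sME00 : sMat k 0 0 = 1 := rfl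
@[simp] lemma sME01 : sMat k 0 1 = 0 := rfl
@[simp] lemma sME02 : sMat k 0 2 = 0 := rfl
@[simp] lemma sME03 : sMat k 0 3 = 0 := rfl
@[simp] lemma sME04 : sMat k 0 4 = 0 := rfl
@[simp] lemma sME05 : sMat k 0 5 = 0 := rfl
@[simp] lemma sME06 : sMat k 0 6 = 0 := rfl
@[simp] lemma sME07 : sMat k 0 7 = 0 := rfl
@[simp] lemma sME10 : sMat k 1 0 = 0 := rfl
@[simp] lemma sME11 : sMat k 1 1 = -1 := rfl
@[simp] lemma sME12 : sMat k 1 2 = 0 := rfl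
@[simp] lemma sME13 : sMat k 1 3 = 0 := rfl
@[simp] lemma sME14 : sMat k 1 4 = 0 := rfl
@[simp] lemma sME15 : sMat k 1 5 = 0 := rfl
@[simp] lemma sME16 : sMat k 1 6 = 0 := rfl
@[simp] lemma sME17 : sMat k 1 7 = 0 := rfl
@[simp] lemma sME20 : sMat k 2 0 = 0 := rfl
@[simp] lemma sME21 : sMat k 2 1 = 0 := rfl
@[simp] lemma sME22 : sMat k 2 2 = -1 := rfl
@[simp] lemma sME23 : sMat k 2 3 = 0 := rfl
@[simp] lemma sME24 : sMat k 2 4 = 0 := rfl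
@[simp] lemma sME25 : sMat k 2 5 = 0 := rfl
@[simp] lemma sME26 : sMat k 2 6 = 0 := rfl
@[simp] lemma sME27 : sMat k 2 7 = 0 := rfl
@[simp] lemma sME30 : sMat k 3 0 = 0 := rfl
@[simp] lemma sME31 : sMat k 3 1 = 0 := rfl
@[simp] lemma sME32 : sMat k 3 2 = 0 := rfl
@[simp] lemma sME33 : sMat k 3 3 = 1 := rfl
@[simp] lemma sME34 : sMat k 3 4 = 0 := rfl
@[simp] lemma sME35 : sMat k 3 5 = 0 := rfl
@[simp] lemma sME36 : sMat k 3 6 = 0 := rfl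
@[simp] lemma sME37 : sMat k 3 7 = 0 := rfl
@[simp] lemma sME40 : sMat k 4 0 = 0 := rfl
@[simp] lemma sME41 : sMat k 4 1 = 0 := rfl
@[simp] lemma sME42 : sMat k 4 2 = 0 := rfl
@[simp] lemma sME43 : sMat k 4 3 = 0 := rfl
@[simp] lemma sME44 : sMat k 4 4 = 1 := rfl
@[simp] lemma sME45 : sMat k 4 5 = 0 := rfl
@[simp] lemma sME46 : sMat k 4 6 = 0 := rfl
@[simp] lemma sME47 : sMat k 4 7 = 0 := rfl
@[simp] lemma sME50 : sMat k 5 0 = 0 := rfl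
@[simp] lemma sME51 : sMat k 5 1 = 0 := rfl
@[simp] lemma sME52 : sMat k 5 2 = 0 := rfl
@[simp] lemma sME53 : sMat k 5 3 = 0 := rfl
@[simp] lemma sME54 : sMat k 5 4 = 0 := rfl
@[simp] lemma sME55 : sMat k 5 5 = -1 := rfl
@[simp] lemma sME56 : sMat k 5 6 = 0 := rfl
@[simp] lemma sME57 : sMat k 5 7 = 0 := rfl
@[simp] lemma sME60 : sMat k 6 0 = 0 := rfl
@[simp] lemma sME61 : sMat k 6 1 = 0 := rfl
@[simp] lemma sME62 : sMat k 6 2 = 0 := rfl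
@[simp] lemma sME63 : sMat k 6 3 = 0 := rfl
@[simp] lemma sME64 : sMat k 6 4 = 0 := rfl
@[simp] lemma sME65 : sMat k 6 5 = 0 := rfl
@[simp] lemma sME66 : sMat k 6 6 = -1 := rfl
@[simp] lemma sME67 : sMat k 6 7 = 0 := rfl
@[simp] lemma sME70 : sMat k 7 0 = 0 := rfl
@[simp] lemma sME71 : sMat k 7 1 = 0 := rfl
@[simp] lemma sME72 : sMat k 7 2 = 0 := rfl
@[simp] lemma sME73 : sMat k 7 3 = 0 := rfl
@[simp] lemma sME74 : sMat k 7 4 = 0 := rfl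
@[simp] lemma sME75 : sMat k 7 5 = 0 := rfl
@[simp] lemma sME76 : sMat k 7 6 = 0 := rfl
@[simp] lemma sME77 : sMat k 7 7 = 1 := rfl
@[simp] lemma emE00 : emat k 0 0 = 0 := rfl
@[simp] lemma emE01 : emat k 0 1 = 1 := rfl
@[simp] lemma emE02 : emat k 0 2 = 0 := rfl
@[simp] lemma emE03 : emat k 0 3 = 0 := rfl
@[simp] lemma emE04 : emat k 0 4 = 0 := rfl
@[simp] lemma emE05 : emat k 0 5 = 1 := rfl
@[simp] lemma emE06 : emat k 0 6 = 0 := rfl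
@[simp] lemma emE07 : emat k 0 7 = 0 := rfl
@[simp] lemma emE10 : emat k 1 0 = 0 := rfl
@[simp] lemma emE11 : emat k 1 1 = 0 := rfl
@[simp] lemma emE12 : emat k 1 2 = 0 := rfl
@[simp] lemma emE13 : emat k 1 3 = 0 := rfl
@[simp] lemma emE14 : emat k 1 4 = 1 := rfl
@[simp] lemma emE15 : emat k 1 5 = 0 := rfl
@[simp] lemma emE16 : emat k 1 6 = 0 := rfl
@[simp] lemma emE17 : emat k 1 7 = 2 := rfl
@[simp] lemma emE20 : emat k 2 0 = 0 := rfl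
@[simp] lemma emE21 : emat k 2 1 = 0 := rfl
@[simp] lemma emE22 : emat k 2 2 = 0 := rfl
@[simp] lemma emE23 : emat k 2 3 = -1 := rfl
@[simp] lemma emE24 : emat k 2 4 = 0 := rfl
@[simp] lemma emE25 : emat k 2 5 = 0 := rfl
@[simp] lemma emE26 : emat k 2 6 = 0 := rfl
@[simp] lemma emE27 : emat k 2 7 = 0 := rfl
@[simp] lemma emE30 : emat k 3 0 = 0 := rfl
@[simp] lemma emE31 : emat k 3 1 = 0 := rfl
@[simp] lemma emE32 : emat k 3 2 = 0 := rfl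
@[simp] lemma emE33 : emat k 3 3 = 0 := rfl
@[simp] lemma emE34 : emat k 3 4 = 0 := rfl
@[simp] lemma emE35 : emat k 3 5 = 0 := rfl
@[simp] lemma emE36 : emat k 3 6 = 0 := rfl
@[simp] lemma emE37 : emat k 3 7 = 0 := rfl
@[simp] lemma emE40 : emat k 4 0 = 0 := rfl
@[simp] lemma emE41 : emat k 4 1 = 0 := rfl
@[simp] lemma emE42 : emat k 4 2 = -2 := rfl
@[simp] lemma emE43 : emat k 4 3 = 0 := rfl
@[simp] lemma emE44 : emat k 4 4 = 0 := rfl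
@[simp] lemma emE45 : emat k 4 5 = 0 := rfl
@[simp] lemma emE46 : emat k 4 6 = 1 := rfl
@[simp] lemma emE47 : emat k 4 7 = 0 := rfl
@[simp] lemma emE50 : emat k 5 0 = 0 := rfl
@[simp] lemma emE51 : emat k 5 1 = 0 := rfl
@[simp] lemma emE52 : emat k 5 2 = 0 := rfl
@[simp] lemma emE53 : emat k 5 3 = 0 := rfl
@[simp] lemma emE54 : emat k 5 4 = 1 := rfl
@[simp] lemma emE55 : emat k 5 5 = 0 := rfl
@[simp] lemma emE56 : emat k 5 6 = 0 := rfl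
@[simp] lemma emE57 : emat k 5 7 = -1 := rfl
@[simp] lemma emE60 : emat k 6 0 = 0 := rfl
@[simp] lemma emE61 : emat k 6 1 = 0 := rfl
@[simp] lemma emE62 : emat k 6 2 = 0 := rfl
@[simp] lemma emE63 : emat k 6 3 = -1 := rfl
@[simp] lemma emE64 : emat k 6 4 = 0 := rfl
@[simp] lemma emE65 : emat k 6 5 = 0 := rfl
@[simp] lemma emE66 : emat k 6 6 = 0 := rfl
@[simp] lemma emE67 : emat k 6 7 = 0 := rfl
@[simp] lemma emE70 : emat k 7 0 = 0 := rfl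
@[simp] lemma emE71 : emat k 7 1 = 0 := rfl
@[simp] lemma emE72 : emat k 7 2 = -1 := rfl
@[simp] lemma emE73 : emat k 7 3 = 0 := rfl
@[simp] lemma emE74 : emat k 7 4 = 0 := rfl
@[simp] lemma emE75 : emat k 7 5 = 0 := rfl
@[simp] lemma emE76 : emat k 7 6 = -1 := rfl
@[simp] lemma emE77 : emat k 7 7 = 0 := rfl
@[simp] lemma E2E00 : E2mat k 0 0 = 0 := rfl
@[simp] lemma E2E01 : E2mat k 0 1 = 0 := rfl
@[simp] lemma E2E02 : E2mat k 0 2 = 0 := rfl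
@[simp] lemma E2E03 : E2mat k 0 3 = 0 := rfl
@[simp] lemma E2E04 : E2mat k 0 4 = 2 := rfl
@[simp] lemma E2E05 : E2mat k 0 5 = 0 := rfl
@[simp] lemma E2E06 : E2mat k 0 6 = 0 := rfl
@[simp] lemma E2E07 : E2mat k 0 7 = 1 := rfl
@[simp] lemma E2E10 : E2mat k 1 0 = 0 := rfl
@[simp] lemma E2E11 : E2mat k 1 1 = 0 := rfl
@[simp] lemma E2E12 : E2mat k 1 2 = -4 := rfl
@[simp] lemma E2E13 : E2mat k 1 3 = 0 := rfl
@[simp] lemma E2E14 : E2mat k 1 4 = 0 := rfl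
@[simp] lemma E2E15 : E2mat k 1 5 = 0 := rfl
@[simp] lemma E2E16 : E2mat k 1 6 = -1 := rfl
@[simp] lemma E2E17 : E2mat k 1 7 = 0 := rfl
@[simp] lemma E2E20 : E2mat k 2 0 = 0 := rfl
@[simp] lemma E2E21 : E2mat k 2 1 = 0 := rfl
@[simp] lemma E2E22 : E2mat k 2 2 = 0 := rfl
@[simp] lemma E2E23 : E2mat k 2 3 = 0 := rfl
@[simp] lemma E2E24 : E2mat k 2 4 = 0 := rfl
@[simp] lemma E2E25 : E2mat k 2 5 = 0 := rfl
@[simp] lemma E2E26 : E2mat k 2 6 = 0 := rfl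
@[simp] lemma E2E27 : E2mat k 2 7 = 0 := rfl
@[simp] lemma E2E30 : E2mat k 3 0 = 0 := rfl
@[simp] lemma E2E31 : E2mat k 3 1 = 0 := rfl
@[simp] lemma E2E32 : E2mat k 3 2 = 0 := rfl
@[simp] lemma E2E33 : E2mat k 3 3 = 0 := rfl
@[simp] lemma E2E34 : E2mat k 3 4 = 0 := rfl
@[simp] lemma E2E35 : E2mat k 3 5 = 0 := rfl
@[simp] lemma E2E36 : E2mat k 3 6 = 0 := rfl
@[simp] lemma E2E37 : E2mat k 3 7 = 0 := rfl
@[simp] lemma E2E40 : E2mat k 4 0 = 0 := rfl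
@[simp] lemma E2E41 : E2mat k 4 1 = 0 := rfl
@[simp] lemma E2E42 : E2mat k 4 2 = 0 := rfl
@[simp] lemma E2E43 : E2mat k 4 3 = 1 := rfl
@[simp] lemma E2E44 : E2mat k 4 4 = 0 := rfl
@[simp] lemma E2E45 : E2mat k 4 5 = 0 := rfl
@[simp] lemma E2E46 : E2mat k 4 6 = 0 := rfl
@[simp] lemma E2E47 : E2mat k 4 7 = 0 := rfl
@[simp] lemma E2E50 : E2mat k 5 0 = 0 := rfl
@[simp] lemma E2E51 : E2mat k 5 1 = 0 := rfl
@[simp] lemma E2E52 : E2mat k 5 2 = -1 := rfl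
@[simp] lemma E2E53 : E2mat k 5 3 = 0 := rfl
@[simp] lemma E2E54 : E2mat k 5 4 = 0 := rfl
@[simp] lemma E2E55 : E2mat k 5 5 = 0 := rfl
@[simp] lemma E2E56 : E2mat k 5 6 = 2 := rfl
@[simp] lemma E2E57 : E2mat k 5 7 = 0 := rfl
@[simp] lemma E2E60 : E2mat k 6 0 = 0 := rfl
@[simp] lemma E2E61 : E2mat k 6 1 = 0 := rfl
@[simp] lemma E2E62 : E2mat k 6 2 = 0 := rfl
@[simp] lemma E2E63 : E2mat k 6 3 = 0 := rfl
@[simp] lemma E2E64 : E2mat k 6 4 = 0 := rfl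
@[simp] lemma E2E65 : E2mat k 6 5 = 0 := rfl
@[simp] lemma E2E66 : E2mat k 6 6 = 0 := rfl
@[simp] lemma E2E67 : E2mat k 6 7 = 0 := rfl
@[simp] lemma E2E70 : E2mat k 7 0 = 0 := rfl
@[simp] lemma E2E71 : E2mat k 7 1 = 0 := rfl
@[simp] lemma E2E72 : E2mat k 7 2 = 0 := rfl
@[simp] lemma E2E73 : E2mat k 7 3 = 2 := rfl
@[simp] lemma E2E74 : E2mat k 7 4 = 0 := rfl
@[simp] lemma E2E75 : E2mat k 7 5 = 0 := rfl
@[simp] lemma E2E76 : E2mat k 7 6 = 0 := rfl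
@[simp] lemma E2E77 : E2mat k 7 7 = 0 := rfl
@[simp] lemma E3E00 : E3mat k 0 0 = 0 := rfl
@[simp] lemma E3E01 : E3mat k 0 1 = 0 := rfl
@[simp] lemma E3E02 : E3mat k 0 2 = -5 := rfl
@[simp] lemma E3E03 : E3mat k 0 3 = 0 := rfl
@[simp] lemma E3E04 : E3mat k 0 4 = 0 := rfl
@[simp] lemma E3E05 : E3mat k 0 5 = 0 := rfl
@[simp] lemma E3E06 : E3mat k 0 6 = 1 := rfl
@[simp] lemma E3E07 : E3mat k 0 7 = 0 := rfl
@[simp] lemma E3E10 : E3mat k 1 0 = 0 := rfl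
@[simp] lemma E3E11 : E3mat k 1 1 = 0 := rfl
@[simp] lemma E3E12 : E3mat k 1 2 = 0 := rfl
@[simp] lemma E3E13 : E3mat k 1 3 = 5 := rfl
@[simp] lemma E3E14 : E3mat k 1 4 = 0 := rfl
@[simp] lemma E3E15 : E3mat k 1 5 = 0 := rfl
@[simp] lemma E3E16 : E3mat k 1 6 = 0 := rfl
@[simp] lemma E3E17 : E3mat k 1 7 = 0 := rfl
@[simp] lemma E3E20 : E3mat k 2 0 = 0 := rfl
@[simp] lemma E3E21 : E3mat k 2 1 = 0 := rfl
@[simp] lemma E3E22 : E3mat k 2 2 = 0 := rfl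
@[simp] lemma E3E23 : E3mat k 2 3 = 0 := rfl
@[simp] lemma E3E24 : E3mat k 2 4 = 0 := rfl
@[simp] lemma E3E25 : E3mat k 2 5 = 0 := rfl
@[simp] lemma E3E26 : E3mat k 2 6 = 0 := rfl
@[simp] lemma E3E27 : E3mat k 2 7 = 0 := rfl
@[simp] lemma E3E30 : E3mat k 3 0 = 0 := rfl
@[simp] lemma E3E31 : E3mat k 3 1 = 0 := rfl
@[simp] lemma E3E32 : E3mat k 3 2 = 0 := rfl
@[simp] lemma E3E33 : E3mat k 3 3 = 0 := rfl
@[simp] lemma E3E34 : E3mat k 3 4 = 0 := rfl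
@[simp] lemma E3E35 : E3mat k 3 5 = 0 := rfl
@[simp] lemma E3E36 : E3mat k 3 6 = 0 := rfl
@[simp] lemma E3E37 : E3mat k 3 7 = 0 := rfl
@[simp] lemma E3E40 : E3mat k 4 0 = 0 := rfl
@[simp] lemma E3E41 : E3mat k 4 1 = 0 := rfl
@[simp] lemma E3E42 : E3mat k 4 2 = 0 := rfl
@[simp] lemma E3E43 : E3mat k 4 3 = 0 := rfl
@[simp] lemma E3E44 : E3mat k 4 4 = 0 := rfl
@[simp] lemma E3E45 : E3mat k 4 5 = 0 := rfl
@[simp] lemma E3E46 : E3mat k 4 6 = 0 := rfl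
@[simp] lemma E3E47 : E3mat k 4 7 = 0 := rfl
@[simp] lemma E3E50 : E3mat k 5 0 = 0 := rfl
@[simp] lemma E3E51 : E3mat k 5 1 = 0 := rfl
@[simp] lemma E3E52 : E3mat k 5 2 = 0 := rfl
@[simp] lemma E3E53 : E3mat k 5 3 = -1 := rfl
@[simp] lemma E3E54 : E3mat k 5 4 = 0 := rfl
@[simp] lemma E3E55 : E3mat k 5 5 = 0 := rfl
@[simp] lemma E3E56 : E3mat k 5 6 = 0 := rfl
@[simp] lemma E3E57 : E3mat k 5 7 = 0 := rfl
@[simp] lemma E3E60 : E3mat k 6 0 = 0 := rfl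
@[simp] lemma E3E61 : E3mat k 6 1 = 0 := rfl
@[simp] lemma E3E62 : E3mat k 6 2 = 0 := rfl
@[simp] lemma E3E63 : E3mat k 6 3 = 0 := rfl
@[simp] lemma E3E64 : E3mat k 6 4 = 0 := rfl
@[simp] lemma E3E65 : E3mat k 6 5 = 0 := rfl
@[simp] lemma E3E66 : E3mat k 6 6 = 0 := rfl
@[simp] lemma E3E67 : E3mat k 6 7 = 0 := rfl
@[simp] lemma E3E70 : E3mat k 7 0 = 0 := rfl
@[simp] lemma E3E71 : E3mat k 7 1 = 0 := rfl
@[simp] lemma E3E72 : E3mat k 7 2 = 0 := rfl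
@[simp] lemma E3E73 : E3mat k 7 3 = 0 := rfl
@[simp] lemma E3E74 : E3mat k 7 4 = 0 := rfl
@[simp] lemma E3E75 : E3mat k 7 5 = 0 := rfl
@[simp] lemma E3E76 : E3mat k 7 6 = 0 := rfl
@[simp] lemma E3E77 : E3mat k 7 7 = 0 := rfl
@[simp] lemma E4E00 : E4mat k 0 0 = 0 := rfl
@[simp] lemma E4E01 : E4mat k 0 1 = 0 := rfl
@[simp] lemma E4E02 : E4mat k 0 2 = 0 := rfl
@[simp] lemma E4E03 : E4mat k 0 3 = 4 := rfl
@[simp] lemma E4E04 : E4mat k 0 4 = 0 := rfl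
@[simp] lemma E4E05 : E4mat k 0 5 = 0 := rfl
@[simp] lemma E4E06 : E4mat k 0 6 = 0 := rfl
@[simp] lemma E4E07 : E4mat k 0 7 = 0 := rfl
@[simp] lemma E4E10 : E4mat k 1 0 = 0 := rfl
@[simp] lemma E4E11 : E4mat k 1 1 = 0 := rfl
@[simp] lemma E4E12 : E4mat k 1 2 = 0 := rfl
@[simp] lemma E4E13 : E4mat k 1 3 = 0 := rfl
@[simp] lemma E4E14 : E4mat k 1 4 = 0 := rfl
@[simp] lemma E4E15 : E4mat k 1 5 = 0 := rfl
@[simp] lemma E4E16 : E4mat k 1 6 = 0 := rfl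
@[simp] lemma E4E17 : E4mat k 1 7 = 0 := rfl
@[simp] lemma E4E20 : E4mat k 2 0 = 0 := rfl
@[simp] lemma E4E21 : E4mat k 2 1 = 0 := rfl
@[simp] lemma E4E22 : E4mat k 2 2 = 0 := rfl
@[simp] lemma E4E23 : E4mat k 2 3 = 0 := rfl
@[simp] lemma E4E24 : E4mat k 2 4 = 0 := rfl
@[simp] lemma E4E25 : E4mat k 2 5 = 0 := rfl
@[simp] lemma E4E26 : E4mat k 2 6 = 0 := rfl
@[simp] lemma E4E27 : E4mat k 2 7 = 0 := rfl
@[simp] lemma E4E30 : E4mat k 3 0 = 0 := rfl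
@[simp] lemma E4E31 : E4mat k 3 1 = 0 := rfl
@[simp] lemma E4E32 : E4mat k 3 2 = 0 := rfl
@[simp] lemma E4E33 : E4mat k 3 3 = 0 := rfl
@[simp] lemma E4E34 : E4mat k 3 4 = 0 := rfl
@[simp] lemma E4E35 : E4mat k 3 5 = 0 := rfl
@[simp] lemma E4E36 : E4mat k 3 6 = 0 := rfl
@[simp] lemma E4E37 : E4mat k 3 7 = 0 := rfl
@[simp] lemma E4E40 : E4mat k 4 0 = 0 := rfl
@[simp] lemma E4E41 : E4mat k 4 1 = 0 := rfl
@[simp] lemma E4E42 : E4mat k 4 2 = 0 := rfl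
@[simp] lemma E4E43 : E4mat k 4 3 = 0 := rfl
@[simp] lemma E4E44 : E4mat k 4 4 = 0 := rfl
@[simp] lemma E4E45 : E4mat k 4 5 = 0 := rfl
@[simp] lemma E4E46 : E4mat k 4 6 = 0 := rfl
@[simp] lemma E4E47 : E4mat k 4 7 = 0 := rfl
@[simp] lemma E4E50 : E4mat k 5 0 = 0 := rfl
@[simp] lemma E4E51 : E4mat k 5 1 = 0 := rfl
@[simp] lemma E4E52 : E4mat k 5 2 = 0 := rfl
@[simp] lemma E4E53 : E4mat k 5 3 = 0 := rfl
@[simp] lemma E4E54 : E4mat k 5 4 = 0 := rfl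
@[simp] lemma E4E55 : E4mat k 5 5 = 0 := rfl
@[simp] lemma E4E56 : E4mat k 5 6 = 0 := rfl
@[simp] lemma E4E57 : E4mat k 5 7 = 0 := rfl
@[simp] lemma E4E60 : E4mat k 6 0 = 0 := rfl
@[simp] lemma E4E61 : E4mat k 6 1 = 0 := rfl
@[simp] lemma E4E62 : E4mat k 6 2 = 0 := rfl
@[simp] lemma E4E63 : E4mat k 6 3 = 0 := rfl
@[simp] lemma E4E64 : E4mat k 6 4 = 0 := rfl
@[simp] lemma E4E65 : E4mat k 6 5 = 0 := rfl
@[simp] lemma E4E66 : E4mat k 6 6 = 0 := rfl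
@[simp] lemma E4E67 : E4mat k 6 7 = 0 := rfl
@[simp] lemma E4E70 : E4mat k 7 0 = 0 := rfl
@[simp] lemma E4E71 : E4mat k 7 1 = 0 := rfl
@[simp] lemma E4E72 : E4mat k 7 2 = 0 := rfl
@[simp] lemma E4E73 : E4mat k 7 3 = 0 := rfl
@[simp] lemma E4E74 : E4mat k 7 4 = 0 := rfl
@[simp] lemma E4E75 : E4mat k 7 5 = 0 := rfl
@[simp] lemma E4E76 : E4mat k 7 6 = 0 := rfl
@[simp] lemma E4E77 : E4mat k 7 7 = 0 := rfl
@[simp] lemma lamE00 (t : k) : lam k t 0 0 = t^2 := rfl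
@[simp] lemma lamE01 (t : k) : lam k t 0 1 = 0 := rfl
@[simp] lemma lamE02 (t : k) : lam k t 0 2 = 0 := rfl
@[simp] lemma lamE03 (t : k) : lam k t 0 3 = 0 := rfl
@[simp] lemma lamE04 (t : k) : lam k t 0 4 = 0 := rfl
@[simp] lemma lamE05 (t : k) : lam k t 0 5 = 0 := rfl
@[simp] lemma lamE06 (t : k) : lam k t 0 6 = 0 := rfl
@[simp] lemma lamE07 (t : k) : lam k t 0 7 = 0 := rfl
@[simp] lemma lamE10 (t : k) : lam k t 1 0 = 0 := rfl
@[simp] lemma lamE11 (t : k) : lam k t 1 1 = t := rfl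
@[simp] lemma lamE12 (t : k) : lam k t 1 2 = 0 := rfl
@[simp] lemma lamE13 (t : k) : lam k t 1 3 = 0 := rfl
@[simp] lemma lamE14 (t : k) : lam k t 1 4 = 0 := rfl
@[simp] lemma lamE15 (t : k) : lam k t 1 5 = 0 := rfl
@[simp] lemma lamE16 (t : k) : lam k t 1 6 = 0 := rfl
@[simp] lemma lamE17 (t : k) : lam k t 1 7 = 0 := rfl
@[simp] lemma lamE20 (t : k) : lam k t 2 0 = 0 := rfl
@[simp] lemma lamE21 (t : k) : lam k t 2 1 = 0 := rfl
@[simp] lemma lamE22 (t : k) : lam k t 2 2 = t⁻¹ := rfl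
@[simp] lemma lamE23 (t : k) : lam k t 2 3 = 0 := rfl
@[simp] lemma lamE24 (t : k) : lam k t 2 4 = 0 := rfl
@[simp] lemma lamE25 (t : k) : lam k t 2 5 = 0 := rfl
@[simp] lemma lamE26 (t : k) : lam k t 2 6 = 0 := rfl
@[simp] lemma lamE27 (t : k) : lam k t 2 7 = 0 := rfl
@[simp] lemma lamE30 (t : k) : lam k t 3 0 = 0 := rfl
@[simp] lemma lamE31 (t : k) : lam k t 3 1 = 0 := rfl
@[simp] lemma lamE32 (t : k) : lam k t 3 2 = 0 := rfl
@[simp] lemma lamE33 (t : k) : lam k t 3 3 = (t⁻¹)^2 := rfl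
@[simp] lemma lamE34 (t : k) : lam k t 3 4 = 0 := rfl
@[simp] lemma lamE35 (t : k) : lam k t 3 5 = 0 := rfl
@[simp] lemma lamE36 (t : k) : lam k t 3 6 = 0 := rfl
@[simp] lemma lamE37 (t : k) : lam k t 3 7 = 0 := rfl
@[simp] lemma lamE40 (t : k) : lam k t 4 0 = 0 := rfl
@[simp] lemma lamE41 (t : k) : lam k t 4 1 = 0 := rfl
@[simp] lemma lamE42 (t : k) : lam k t 4 2 = 0 := rfl
@[simp] lemma lamE43 (t : k) : lam k t 4 3 = 0 := rfl
@[simp] lemma lamE44 (t : k) : lam k t 4 4 = 1 := rfl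
@[simp] lemma lamE45 (t : k) : lam k t 4 5 = 0 := rfl
@[simp] lemma lamE46 (t : k) : lam k t 4 6 = 0 := rfl
@[simp] lemma lamE47 (t : k) : lam k t 4 7 = 0 := rfl
@[simp] lemma lamE50 (t : k) : lam k t 5 0 = 0 := rfl
@[simp] lemma lamE51 (t : k) : lam k t 5 1 = 0 := rfl
@[simp] lemma lamE52 (t : k) : lam k t 5 2 = 0 := rfl
@[simp] lemma lamE53 (t : k) : lam k t 5 3 = 0 := rfl
@[simp] lemma lamE54 (t : k) : lam k t 5 4 = 0 := rfl
@[simp] lemma lamE55 (t : k) : lam k t 5 5 = t := rfl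
@[simp] lemma lamE56 (t : k) : lam k t 5 6 = 0 := rfl
@[simp] lemma lamE57 (t : k) : lam k t 5 7 = 0 := rfl
@[simp] lemma lamE60 (t : k) : lam k t 6 0 = 0 := rfl
@[simp] lemma lamE61 (t : k) : lam k t 6 1 = 0 := rfl
@[simp] lemma lamE62 (t : k) : lam k t 6 2 = 0 := rfl
@[simp] lemma lamE63 (t : k) : lam k t 6 3 = 0 := rfl
@[simp] lemma lamE64 (t : k) : lam k t 6 4 = 0 := rfl
@[simp] lemma lamE65 (t : k) : lam k t 6 5 = 0 := rfl
@[simp] lemma lamE66 (t : k) : lam k t 6 6 = t⁻¹ := rfl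
@[simp] lemma lamE67 (t : k) : lam k t 6 7 = 0 := rfl
@[simp] lemma lamE70 (t : k) : lam k t 7 0 = 0 := rfl
@[simp] lemma lamE71 (t : k) : lam k t 7 1 = 0 := rfl
@[simp] lemma lamE72 (t : k) : lam k t 7 2 = 0 := rfl
@[simp] lemma lamE73 (t : k) : lam k t 7 3 = 0 := rfl
@[simp] lemma lamE74 (t : k) : lam k t 7 4 = 0 := rfl
@[simp] lemma lamE75 (t : k) : lam k t 7 5 = 0 := rfl
@[simp] lemma lamE76 (t : k) : lam k t 7 6 = 0 := rfl
@[simp] lemma lamE77 (t : k) : lam k t 7 7 = 1 := rfl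
@[simp] lemma oneE00 : (1 : Matrix (Fin 8) (Fin 8) k) 0 0 = 1 := rfl
@[simp] lemma oneE01 : (1 : Matrix (Fin 8) (Fin 8) k) 0 1 = 0 := rfl
@[simp] lemma oneE02 : (1 : Matrix (Fin 8) (Fin 8) k) 0 2 = 0 := rfl
@[simp] lemma oneE03 : (1 : Matrix (Fin 8) (Fin 8) k) 0 3 = 0 := rfl
@[simp] lemma oneE04 : (1 : Matrix (Fin 8) (Fin 8) k) 0 4 = 0 := rfl
@[simp] lemma oneE05 : (1 : Matrix (Fin 8) (Fin 8) k) 0 5 = 0 := rfl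
@[simp] lemma oneE06 : (1 : Matrix (Fin 8) (Fin 8) k) 0 6 = 0 := rfl
@[simp] lemma oneE07 : (1 : Matrix (Fin 8) (Fin 8) k) 0 7 = 0 := rfl
@[simp] lemma oneE10 : (1 : Matrix (Fin 8) (Fin 8) k) 1 0 = 0 := rfl
@[simp] lemma oneE11 : (1 : Matrix (Fin 8) (Fin 8) k) 1 1 = 1 := rfl
@[simp] lemma oneE12 : (1 : Matrix (Fin 8) (Fin 8) k) 1 2 = 0 := rfl
@[simp] lemma oneE13 : (1 : Matrix (Fin 8) (Fin 8) k) 1 3 = 0 := rfl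
@[simp] lemma oneE14 : (1 : Matrix (Fin 8) (Fin 8) k) 1 4 = 0 := rfl
@[simp] lemma oneE15 : (1 : Matrix (Fin 8) (Fin 8) k) 1 5 = 0 := rfl
@[simp] lemma oneE16 : (1 : Matrix (Fin 8) (Fin 8) k) 1 6 = 0 := rfl
@[simp] lemma oneE17 : (1 : Matrix (Fin 8) (Fin 8) k) 1 7 = 0 := rfl
@[simp] lemma oneE20 : (1 : Matrix (Fin 8) (Fin 8) k) 2 0 = 0 := rfl
@[simp] lemma oneE21 : (1 : Matrix (Fin 8) (Fin 8) k) 2 1 = 0 := rfl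
@[simp] lemma oneE22 : (1 : Matrix (Fin 8) (Fin 8) k) 2 2 = 1 := rfl
@[simp] lemma oneE23 : (1 : Matrix (Fin 8) (Fin 8) k) 2 3 = 0 := rfl
@[simp] lemma oneE24 : (1 : Matrix (Fin 8) (Fin 8) k) 2 4 = 0 := rfl
@[simp] lemma oneE25 : (1 : Matrix (Fin 8) (Fin 8) k) 2 5 = 0 := rfl
@[simp] lemma oneE26 : (1 : Matrix (Fin 8) (Fin 8) k) 2 6 = 0 := rfl
@[simp] lemma oneE27 : (1 : Matrix (Fin 8) (Fin 8) k) 2 7 = 0 := rfl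
@[simp] lemma oneE30 : (1 : Matrix (Fin 8) (Fin 8) k) 3 0 = 0 := rfl
@[simp] lemma oneE31 : (1 : Matrix (Fin 8) (Fin 8) k) 3 1 = 0 := rfl
@[simp] lemma oneE32 : (1 : Matrix (Fin 8) (Fin 8) k) 3 2 = 0 := rfl
@[simp] lemma oneE33 : (1 : Matrix (Fin 8) (Fin 8) k) 3 3 = 1 := rfl
@[simp] lemma oneE34 : (1 : Matrix (Fin 8) (Fin 8) k) 3 4 = 0 := rfl
@[simp] lemma oneE35 : (1 : Matrix (Fin 8) (Fin 8) k) 3 5 = 0 := rfl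
@[simp] lemma oneE36 : (1 : Matrix (Fin 8) (Fin 8) k) 3 6 = 0 := rfl
@[simp] lemma oneE37 : (1 : Matrix (Fin 8) (Fin 8) k) 3 7 = 0 := rfl
@[simp] lemma oneE40 : (1 : Matrix (Fin 8) (Fin 8) k) 4 0 = 0 := rfl
@[simp] lemma oneE41 : (1 : Matrix (Fin 8) (Fin 8) k) 4 1 = 0 := rfl
@[simp] lemma oneE42 : (1 : Matrix (Fin 8) (Fin 8) k) 4 2 = 0 := rfl
@[simp] lemma oneE43 : (1 : Matrix (Fin 8) (Fin 8) k) 4 3 = 0 := rfl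
@[simp] lemma oneE44 : (1 : Matrix (Fin 8) (Fin 8) k) 4 4 = 1 := rfl
@[simp] lemma oneE45 : (1 : Matrix (Fin 8) (Fin 8) k) 4 5 = 0 := rfl
@[simp] lemma oneE46 : (1 : Matrix (Fin 8) (Fin 8) k) 4 6 = 0 := rfl
@[simp] lemma oneE47 : (1 : Matrix (Fin 8) (Fin 8) k) 4 7 = 0 := rfl
@[simp] lemma oneE50 : (1 : Matrix (Fin 8) (Fin 8) k) 5 0 = 0 := rfl
@[simp] lemma oneE51 : (1 : Matrix (Fin 8) (Fin 8) k) 5 1 = 0 := rfl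
@[simp] lemma oneE52 : (1 : Matrix (Fin 8) (Fin 8) k) 5 2 = 0 := rfl
@[simp] lemma oneE53 : (1 : Matrix (Fin 8) (Fin 8) k) 5 3 = 0 := rfl
@[simp] lemma oneE54 : (1 : Matrix (Fin 8) (Fin 8) k) 5 4 = 0 := rfl
@[simp] lemma oneE55 : (1 : Matrix (Fin 8) (Fin 8) k) 5 5 = 1 := rfl
@[simp] lemma oneE56 : (1 : Matrix (Fin 8) (Fin 8) k) 5 6 = 0 := rfl
@[simp] lemma oneE57 : (1 : Matrix (Fin 8) (Fin 8) k) 5 7 = 0 := rfl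
@[simp] lemma oneE60 : (1 : Matrix (Fin 8) (Fin 8) k) 6 0 = 0 := rfl
@[simp] lemma oneE61 : (1 : Matrix (Fin 8) (Fin 8) k) 6 1 = 0 := rfl
@[simp] lemma oneE62 : (1 : Matrix (Fin 8) (Fin 8) k) 6 2 = 0 := rfl
@[simp] lemma oneE63 : (1 : Matrix (Fin 8) (Fin 8) k) 6 3 = 0 := rfl
@[simp] lemma oneE64 : (1 : Matrix (Fin 8) (Fin 8) k) 6 4 = 0 := rfl
@[simp] lemma oneE65 : (1 : Matrix (Fin 8) (Fin 8) k) 6 5 = 0 := rfl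
@[simp] lemma oneE66 : (1 : Matrix (Fin 8) (Fin 8) k) 6 6 = 1 := rfl
@[simp] lemma oneE67 : (1 : Matrix (Fin 8) (Fin 8) k) 6 7 = 0 := rfl
@[simp] lemma oneE70 : (1 : Matrix (Fin 8) (Fin 8) k) 7 0 = 0 := rfl
@[simp] lemma oneE71 : (1 : Matrix (Fin 8) (Fin 8) k) 7 1 = 0 := rfl
@[simp] lemma oneE72 : (1 : Matrix (Fin 8) (Fin 8) k) 7 2 = 0 := rfl
@[simp] lemma oneE73 : (1 : Matrix (Fin 8) (Fin 8) k) 7 3 = 0 := rfl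
@[simp] lemma oneE74 : (1 : Matrix (Fin 8) (Fin 8) k) 7 4 = 0 := rfl
@[simp] lemma oneE75 : (1 : Matrix (Fin 8) (Fin 8) k) 7 5 = 0 := rfl
@[simp] lemma oneE76 : (1 : Matrix (Fin 8) (Fin 8) k) 7 6 = 0 := rfl
@[simp] lemma oneE77 : (1 : Matrix (Fin 8) (Fin 8) k) 7 7 = 1 := rfl
@[simp] lemma CmE00 (a b c u h g : k) : Cmat k a b c u h g 0 0 = 0 := rfl
@[simp] lemma CmE01 (a b c u h g : k) : Cmat k a b c u h g 0 1 = -2*c - 2*u - g := rfl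
@[simp] lemma CmE02 (a b c u h g : k) : Cmat k a b c u h g 0 2 = -a := rfl
@[simp] lemma CmE03 (a b c u h g : k) : Cmat k a b c u h g 0 3 = 0 := rfl
@[simp] lemma CmE04 (a b c u h g : k) : Cmat k a b c u h g 0 4 = -2*h := rfl
@[simp] lemma CmE05 (a b c u h g : k) : Cmat k a b c u h g 0 5 = -c := rfl
@[simp] lemma CmE06 (a b c u h g : k) : Cmat k a b c u h g 0 6 = -b := rfl
@[simp] lemma CmE07 (a b c u h g : k) : Cmat k a b c u h g 0 7 = h := rfl
@[simp] lemma CmE10 (a b c u h g : k) : Cmat k a b c u h g 1 0 = 0 := rfl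
@[simp] lemma CmE11 (a b c u h g : k) : Cmat k a b c u h g 1 1 = 0 := rfl
@[simp] lemma CmE12 (a b c u h g : k) : Cmat k a b c u h g 1 2 = 0 := rfl
@[simp] lemma CmE13 (a b c u h g : k) : Cmat k a b c u h g 1 3 = a := rfl
@[simp] lemma CmE14 (a b c u h g : k) : Cmat k a b c u h g 1 4 = -3*c - 2*u := rfl
@[simp] lemma CmE15 (a b c u h g : k) : Cmat k a b c u h g 1 5 = 0 := rfl
@[simp] lemma CmE16 (a b c u h g : k) : Cmat k a b c u h g 1 6 = -3*h := rfl
@[simp] lemma CmE17 (a b c u h g : k) : Cmat k a b c u h g 1 7 = -3*c - 3*u - 2*g := rfl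
@[simp] lemma CmE20 (a b c u h g : k) : Cmat k a b c u h g 2 0 = 0 := rfl
@[simp] lemma CmE21 (a b c u h g : k) : Cmat k a b c u h g 2 1 = 0 := rfl
@[simp] lemma CmE22 (a b c u h g : k) : Cmat k a b c u h g 2 2 = 0 := rfl
@[simp] lemma CmE23 (a b c u h g : k) : Cmat k a b c u h g 2 3 = 2*c + 2*u + g := rfl
@[simp] lemma CmE24 (a b c u h g : k) : Cmat k a b c u h g 2 4 = 0 := rfl
@[simp] lemma CmE25 (a b c u h g : k) : Cmat k a b c u h g 2 5 = 0 := rfl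
@[simp] lemma CmE26 (a b c u h g : k) : Cmat k a b c u h g 2 6 = 0 := rfl
@[simp] lemma CmE27 (a b c u h g : k) : Cmat k a b c u h g 2 7 = 0 := rfl
@[simp] lemma CmE30 (a b c u h g : k) : Cmat k a b c u h g 3 0 = 0 := rfl
@[simp] lemma CmE31 (a b c u h g : k) : Cmat k a b c u h g 3 1 = 0 := rfl
@[simp] lemma CmE32 (a b c u h g : k) : Cmat k a b c u h g 3 2 = 0 := rfl
@[simp] lemma CmE33 (a b c u h g : k) : Cmat k a b c u h g 3 3 = 0 := rfl
@[simp] lemma CmE34 (a b c u h g : k) : Cmat k a b c u h g 3 4 = 0 := rfl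
@[simp] lemma CmE35 (a b c u h g : k) : Cmat k a b c u h g 3 5 = 0 := rfl
@[simp] lemma CmE36 (a b c u h g : k) : Cmat k a b c u h g 3 6 = 0 := rfl
@[simp] lemma CmE37 (a b c u h g : k) : Cmat k a b c u h g 3 7 = 0 := rfl
@[simp] lemma CmE40 (a b c u h g : k) : Cmat k a b c u h g 4 0 = 0 := rfl
@[simp] lemma CmE41 (a b c u h g : k) : Cmat k a b c u h g 4 1 = 0 := rfl
@[simp] lemma CmE42 (a b c u h g : k) : Cmat k a b c u h g 4 2 = 3*c + 3*u + 2*g := rfl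
@[simp] lemma CmE43 (a b c u h g : k) : Cmat k a b c u h g 4 3 = -h := rfl
@[simp] lemma CmE44 (a b c u h g : k) : Cmat k a b c u h g 4 4 = 0 := rfl
@[simp] lemma CmE45 (a b c u h g : k) : Cmat k a b c u h g 4 5 = 0 := rfl
@[simp] lemma CmE46 (a b c u h g : k) : Cmat k a b c u h g 4 6 = u := rfl
@[simp] lemma CmE47 (a b c u h g : k) : Cmat k a b c u h g 4 7 = 0 := rfl
@[simp] lemma CmE50 (a b c u h g : k) : Cmat k a b c u h g 5 0 = 0 := rfl
@[simp] lemma CmE51 (a b c u h g : k) : Cmat k a b c u h g 5 1 = 0 := rfl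
@[simp] lemma CmE52 (a b c u h g : k) : Cmat k a b c u h g 5 2 = 3*h := rfl
@[simp] lemma CmE53 (a b c u h g : k) : Cmat k a b c u h g 5 3 = b := rfl
@[simp] lemma CmE54 (a b c u h g : k) : Cmat k a b c u h g 5 4 = -g := rfl
@[simp] lemma CmE55 (a b c u h g : k) : Cmat k a b c u h g 5 5 = 0 := rfl
@[simp] lemma CmE56 (a b c u h g : k) : Cmat k a b c u h g 5 6 = 0 := rfl
@[simp] lemma CmE57 (a b c u h g : k) : Cmat k a b c u h g 5 7 = -u := rfl
@[simp] lemma CmE60 (a b c u h g : k) : Cmat k a b c u h g 6 0 = 0 := rfl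
@[simp] lemma CmE61 (a b c u h g : k) : Cmat k a b c u h g 6 1 = 0 := rfl
@[simp] lemma CmE62 (a b c u h g : k) : Cmat k a b c u h g 6 2 = 0 := rfl
@[simp] lemma CmE63 (a b c u h g : k) : Cmat k a b c u h g 6 3 = c := rfl
@[simp] lemma CmE64 (a b c u h g : k) : Cmat k a b c u h g 6 4 = 0 := rfl
@[simp] lemma CmE65 (a b c u h g : k) : Cmat k a b c u h g 6 5 = 0 := rfl
@[simp] lemma CmE66 (a b c u h g : k) : Cmat k a b c u h g 6 6 = 0 := rfl
@[simp] lemma CmE67 (a b c u h g : k) : Cmat k a b c u h g 6 7 = 0 := rfl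
@[simp] lemma CmE70 (a b c u h g : k) : Cmat k a b c u h g 7 0 = 0 := rfl
@[simp] lemma CmE71 (a b c u h g : k) : Cmat k a b c u h g 7 1 = 0 := rfl
@[simp] lemma CmE72 (a b c u h g : k) : Cmat k a b c u h g 7 2 = 3*c + 2*u := rfl
@[simp] lemma CmE73 (a b c u h g : k) : Cmat k a b c u h g 7 3 = 2*h := rfl
@[simp] lemma CmE74 (a b c u h g : k) : Cmat k a b c u h g 7 4 = 0 := rfl
@[simp] lemma CmE75 (a b c u h g : k) : Cmat k a b c u h g 7 5 = 0 := rfl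
@[simp] lemma CmE76 (a b c u h g : k) : Cmat k a b c u h g 7 6 = g := rfl
@[simp] lemma CmE77 (a b c u h g : k) : Cmat k a b c u h g 7 7 = 0 := rfl
end EntryLemmas

-- ===== auxiliary lemmas =====
lemma castne (k : Type*) [Field k] (hch : 23 ≤ ringChar k) (D : ℕ) (h1 : 0 < D)
    (h2 : D < 23) : (D : k) ≠ 0 := by
  intro h
  haveI := ringChar.charP k
  have hd := (CharP.cast_eq_zero_iff k (ringChar k) D).mp h
  have := Nat.le_of_dvd h1 hd
  omega

lemma Cmat_so8 (k : Type*) [Field k] (a b c u h g : k) :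
    (Cmat k a b c u h g)ᵀ * Psi k = -(Psi k * Cmat k a b c u h g) := by
  ext i j
  fin_cases i <;> fin_cases j <;>
    simp [Matrix.mul_apply, Fin.sum_univ_eight] <;> ring

lemma Cmat_comm (k : Type*) [Field k] (a b c u h g : k) :
    Cmat k a b c u h g * emat k = emat k * Cmat k a b c u h g := by
  ext i j
  fin_cases i <;> fin_cases j <;>
    simp [Matrix.mul_apply, Fin.sum_univ_eight] <;> ring

lemma key (k : Type*) [Field k] (hch : 23 ≤ ringChar k)
    (x : Matrix (Fin 8) (Fin 8) k)
    (hso : xᵀ * Psi k = -(Psi k * x)) (hcm : x * emat k = emat k * x) :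
    x = Cmat k (x 1 3) (x 5 3) (x 6 3) (x 4 6) (x 0 7) (x 7 6) := by
  have hd2 : ((2 : ℕ) : k) ≠ 0 := castne k hch 2 (by norm_num) (by norm_num)
  have hd4 : ((4 : ℕ) : k) ≠ 0 := castne k hch 4 (by norm_num) (by norm_num)
  have hd6 : ((6 : ℕ) : k) ≠ 0 := castne k hch 6 (by norm_num) (by norm_num)
  have hd8 : ((8 : ℕ) : k) ≠ 0 := castne k hch 8 (by norm_num) (by norm_num)
  have hd12 : ((12 : ℕ) : k) ≠ 0 := castne k hch 12 (by norm_num) (by norm_num)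
  have hd24 : ((24 : ℕ) : k) ≠ 0 := by
    have h := mul_ne_zero hd2 hd12
    exact_mod_cast h
  have hA_0_0 := congrFun (congrFun hso 0) 0
  have hA_0_3 := congrFun (congrFun hso 0) 3
  have hA_0_4 := congrFun (congrFun hso 0) 4
  have hA_0_5 := congrFun (congrFun hso 0) 5
  have hA_0_6 := congrFun (congrFun hso 0) 6
  have hA_0_7 := congrFun (congrFun hso 0) 7
  have hA_1_0 := congrFun (congrFun hso 1) 0
  have hA_1_1 := congrFun (congrFun hso 1) 1
  have hA_1_2 := congrFun (congrFun hso 1) 2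
  have hA_1_3 := congrFun (congrFun hso 1) 3
  have hA_1_4 := congrFun (congrFun hso 1) 4
  have hA_1_5 := congrFun (congrFun hso 1) 5
  have hA_1_6 := congrFun (congrFun hso 1) 6
  have hA_2_0 := congrFun (congrFun hso 2) 0
  have hA_2_2 := congrFun (congrFun hso 2) 2
  have hA_2_3 := congrFun (congrFun hso 2) 3
  have hA_2_4 := congrFun (congrFun hso 2) 4
  have hA_2_5 := congrFun (congrFun hso 2) 5
  have hA_2_6 := congrFun (congrFun hso 2) 6
  have hA_2_7 := congrFun (congrFun hso 2) 7
  have hA_3_3 := congrFun (congrFun hso 3) 3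
  have hA_3_4 := congrFun (congrFun hso 3) 4
  have hA_3_5 := congrFun (congrFun hso 3) 5
  have hA_3_6 := congrFun (congrFun hso 3) 6
  have hA_3_7 := congrFun (congrFun hso 3) 7
  have hA_4_4 := congrFun (congrFun hso 4) 4
  have hA_4_7 := congrFun (congrFun hso 4) 7
  have hA_5_4 := congrFun (congrFun hso 5) 4
  have hA_5_5 := congrFun (congrFun hso 5) 5
  have hA_5_6 := congrFun (congrFun hso 5) 6
  have hA_5_7 := congrFun (congrFun hso 5) 7
  have hA_6_4 := congrFun (congrFun hso 6) 4
  have hA_6_6 := congrFun (congrFun hso 6) 6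
  have hA_6_7 := congrFun (congrFun hso 6) 7
  have hA_7_1 := congrFun (congrFun hso 7) 1
  have hA_7_7 := congrFun (congrFun hso 7) 7
  have hB_0_0 := congrFun (congrFun hcm 0) 0
  have hB_0_1 := congrFun (congrFun hcm 0) 1
  have hB_0_2 := congrFun (congrFun hcm 0) 2
  have hB_0_4 := congrFun (congrFun hcm 0) 4
  have hB_0_5 := congrFun (congrFun hcm 0) 5
  have hB_0_6 := congrFun (congrFun hcm 0) 6
  have hB_0_7 := congrFun (congrFun hcm 0) 7
  have hB_1_0 := congrFun (congrFun hcm 1) 0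
  have hB_1_1 := congrFun (congrFun hcm 1) 1
  have hB_1_4 := congrFun (congrFun hcm 1) 4
  have hB_1_5 := congrFun (congrFun hcm 1) 5
  have hB_1_6 := congrFun (congrFun hcm 1) 6
  have hB_1_7 := congrFun (congrFun hcm 1) 7
  have hB_2_4 := congrFun (congrFun hcm 2) 4
  have hB_2_5 := congrFun (congrFun hcm 2) 5
  have hB_2_6 := congrFun (congrFun hcm 2) 6
  have hB_2_7 := congrFun (congrFun hcm 2) 7
  have hB_3_4 := congrFun (congrFun hcm 3) 4
  have hB_4_4 := congrFun (congrFun hcm 4) 4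
  have hB_4_6 := congrFun (congrFun hcm 4) 6
  have hB_5_4 := congrFun (congrFun hcm 5) 4
  have hB_5_5 := congrFun (congrFun hcm 5) 5
  simp only [Matrix.mul_apply, Fin.sum_univ_eight, Matrix.transpose_apply, Matrix.neg_apply,
    PsiE00 (k := k), PsiE01 (k := k), PsiE02 (k := k), PsiE03 (k := k), PsiE04 (k := k), PsiE05 (k := k), PsiE06 (k := k), PsiE07 (k := k),
    PsiE10 (k := k), PsiE11 (k := k), PsiE12 (k := k), PsiE13 (k := k), PsiE14 (k := k), PsiE15 (k := k), PsiE16 (k := k), PsiE17 (k := k),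
    PsiE20 (k := k), PsiE21 (k := k), PsiE22 (k := k), PsiE23 (k := k), PsiE24 (k := k), PsiE25 (k := k), PsiE26 (k := k), PsiE27 (k := k),
    PsiE30 (k := k), PsiE31 (k := k), PsiE32 (k := k), PsiE33 (k := k), PsiE34 (k := k), PsiE35 (k := k), PsiE36 (k := k), PsiE37 (k := k),
    PsiE40 (k := k), PsiE41 (k := k), PsiE42 (k := k), PsiE43 (k := k), PsiE44 (k := k), PsiE45 (k := k), PsiE46 (k := k), PsiE47 (k := k),
    PsiE50 (k := k), PsiE51 (k := k), PsiE52 (k := k), PsiE53 (k := k), PsiE54 (k := k), PsiE55 (k := k), PsiE56 (k := k), PsiE57 (k := k),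
    PsiE60 (k := k), PsiE61 (k := k), PsiE62 (k := k), PsiE63 (k := k), PsiE64 (k := k), PsiE65 (k := k), PsiE66 (k := k), PsiE67 (k := k),
    PsiE70 (k := k), PsiE71 (k := k), PsiE72 (k := k), PsiE73 (k := k), PsiE74 (k := k), PsiE75 (k := k), PsiE76 (k := k), PsiE77 (k := k),
    emE00 (k := k), emE01 (k := k), emE02 (k := k), emE03 (k := k), emE04 (k := k), emE05 (k := k), emE06 (k := k), emE07 (k := k),
    emE10 (k := k), emE11 (k := k), emE12 (k := k), emE13 (k := k), emE14 (k := k), emE15 (k := k), emE16 (k := k), emE17 (k := k),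
    emE20 (k := k), emE21 (k := k), emE22 (k := k), emE23 (k := k), emE24 (k := k), emE25 (k := k), emE26 (k := k), emE27 (k := k),
    emE30 (k := k), emE31 (k := k), emE32 (k := k), emE33 (k := k), emE34 (k := k), emE35 (k := k), emE36 (k := k), emE37 (k := k),
    emE40 (k := k), emE41 (k := k), emE42 (k := k), emE43 (k := k), emE44 (k := k), emE45 (k := k), emE46 (k := k), emE47 (k := k),
    emE50 (k := k), emE51 (k := k), emE52 (k := k), emE53 (k := k), emE54 (k := k), emE55 (k := k), emE56 (k := k), emE57 (k := k),
    emE60 (k := k), emE61 (k := k), emE62 (k := k), emE63 (k := k), emE64 (k := k), emE65 (k := k), emE66 (k := k), emE67 (k := k),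
    emE70 (k := k), emE71 (k := k), emE72 (k := k), emE73 (k := k), emE74 (k := k), emE75 (k := k), emE76 (k := k), emE77 (k := k),
    mul_zero, zero_mul, mul_one, one_mul, mul_neg, neg_mul, add_zero, zero_add, neg_zero, neg_neg]
    at hA_0_0 hA_0_3 hA_0_4 hA_0_5 hA_0_6 hA_0_7 hA_1_0 hA_1_1 hA_1_2 hA_1_3 hA_1_4 hA_1_5 hA_1_6 hA_2_0 hA_2_2 hA_2_3 hA_2_4 hA_2_5 hA_2_6 hA_2_7 hA_3_3 hA_3_4 hA_3_5 hA_3_6 hA_3_7 hA_4_4 hA_4_7 hA_5_4 hA_5_5 hA_5_6 hA_5_7 hA_6_4 hA_6_6 hA_6_7 hA_7_1 hA_7_7 hB_0_0 hB_0_1 hB_0_2 hB_0_4 hB_0_5 hB_0_6 hB_0_7 hB_1_0 hB_1_1 hB_1_4 hB_1_5 hB_1_6 hB_1_7 hB_2_4 hB_2_5 hB_2_6 hB_2_7 hB_3_4 hB_4_4 hB_4_6 hB_5_4 hB_5_5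
  have hq_0_0 : x 0 0 = (0) := by
    refine mul_left_cancel₀ hd8 ?_
    linear_combination (8 : k) * hA_1_6 + (1 : k) * hA_4_4 + (8 : k) * hA_4_7 + (-4 : k) * hA_5_6 + (10 : k) * hB_0_1 + (-2 : k) * hB_0_5 + (2 : k) * hB_1_4 + (4 : k) * hB_1_7 + (-4 : k) * hB_4_6 + (2 : k) * hB_5_4
  have hq_0_1 : x 0 1 = (-2*x 6 3 - 2*x 4 6 - x 7 6) := by
    linear_combination (2 : k) * hA_3_5 + (-1 : k) * hA_6_4 + (1 : k) * hA_6_7 + (-1 : k) * hB_0_4 + (1 : k) * hB_0_7 + (-1 : k) * hB_1_6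
  have hq_0_2 : x 0 2 = (-x 1 3) := by
    linear_combination (1 : k) * hA_2_3
  have hq_0_3 : x 0 3 = (0) := by
    refine mul_left_cancel₀ hd2 ?_
    linear_combination (1 : k) * hA_3_3
  have hq_0_4 : x 0 4 = (-2*x 0 7) := by
    refine mul_left_cancel₀ hd2 ?_
    linear_combination (-1 : k) * hA_2_2 + (-2 : k) * hA_2_6 + (-1 : k) * hA_6_6 + (-2 : k) * hB_0_2 + (-2 : k) * hB_0_6
  have hq_0_5 : x 0 5 = (-x 6 3) := by
    linear_combination (1 : k) * hA_3_5
  have hq_0_6 : x 0 6 = (-x 5 3) := by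
    linear_combination (1 : k) * hA_3_6
  have hq_1_0 : x 1 0 = (0) := by
    refine mul_left_cancel₀ hd4 ?_
    linear_combination (-4 : k) * hA_0_6 + (2 : k) * hA_1_4 + (-3 : k) * hA_5_4 + (4 : k) * hA_7_1 + (-5 : k) * hB_0_0 + (1 : k) * hB_1_1 + (-2 : k) * hB_1_5 + (4 : k) * hB_2_6 + (-3 : k) * hB_4_4 + (-1 : k) * hB_5_5
  have hq_1_1 : x 1 1 = (0) := by
    refine mul_left_cancel₀ hd24 ?_
    linear_combination (-8 : k) * hA_1_6 + (9 : k) * hA_4_4 + (8 : k) * hA_4_7 + (4 : k) * hA_5_6 + (4 : k) * hA_7_7 + (-6 : k) * hB_0_1 + (6 : k) * hB_0_5 + (10 : k) * hB_1_4 + (4 : k) * hB_1_7 + (4 : k) * hB_4_6 + (2 : k) * hB_5_4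
  have hq_1_2 : x 1 2 = (0) := by
    refine mul_left_cancel₀ hd2 ?_
    linear_combination (1 : k) * hA_2_2
  have hq_1_4 : x 1 4 = (-3*x 6 3 - 2*x 4 6) := by
    linear_combination (3 : k) * hA_3_5 + (-2 : k) * hA_6_4 + (1 : k) * hA_6_7 + (-2 : k) * hB_0_4 + (1 : k) * hB_0_7 + (-1 : k) * hB_1_6
  have hq_1_5 : x 1 5 = (0) := by
    refine mul_left_cancel₀ hd6 ?_
    linear_combination (8 : k) * hA_1_6 + (3 : k) * hA_4_4 + (4 : k) * hA_4_7 + (-4 : k) * hA_5_6 + (-1 : k) * hA_7_7 + (6 : k) * hB_0_1 + (-6 : k) * hB_0_5 + (2 : k) * hB_1_4 + (2 : k) * hB_1_7 + (-4 : k) * hB_4_6 + (-2 : k) * hB_5_4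
  have hq_1_6 : x 1 6 = (-3*x 0 7) := by
    refine mul_left_cancel₀ hd2 ?_
    linear_combination (-1 : k) * hA_2_2 + (-2 : k) * hA_2_6 + (-2 : k) * hA_6_6 + (-2 : k) * hB_0_2 + (-4 : k) * hB_0_6
  have hq_1_7 : x 1 7 = (-3*x 6 3 - 3*x 4 6 - 2*x 7 6) := by
    linear_combination (3 : k) * hA_3_5 + (-2 : k) * hA_6_4 + (1 : k) * hA_6_7 + (-2 : k) * hB_0_4 + (1 : k) * hB_0_7 + (-2 : k) * hB_1_6
  have hq_2_0 : x 2 0 = (0) := by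
    refine mul_left_cancel₀ hd2 ?_
    linear_combination (1 : k) * hA_1_0 + (1 : k) * hB_2_5 + (-1 : k) * hB_3_4
  have hq_2_1 : x 2 1 = (0) := by
    refine mul_left_cancel₀ hd2 ?_
    linear_combination (1 : k) * hA_1_1
  have hq_2_2 : x 2 2 = (0) := by
    refine mul_left_cancel₀ hd24 ?_
    linear_combination (24 : k) * hA_1_2 + (8 : k) * hA_1_6 + (-9 : k) * hA_4_4 + (-8 : k) * hA_4_7 + (-4 : k) * hA_5_6 + (-4 : k) * hA_7_7 + (6 : k) * hB_0_1 + (-6 : k) * hB_0_5 + (-10 : k) * hB_1_4 + (-4 : k) * hB_1_7 + (-4 : k) * hB_4_6 + (-2 : k) * hB_5_4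
  have hq_2_3 : x 2 3 = (2*x 6 3 + 2*x 4 6 + x 7 6) := by
    linear_combination (1 : k) * hA_1_3 + (-2 : k) * hA_3_5 + (1 : k) * hA_6_4 + (-1 : k) * hA_6_7 + (1 : k) * hB_0_4 + (-1 : k) * hB_0_7 + (1 : k) * hB_1_6
  have hq_2_4 : x 2 4 = (0) := by
    refine mul_left_cancel₀ hd6 ?_
    linear_combination (2 : k) * hA_0_6 + (2 : k) * hA_1_4 + (3 : k) * hA_5_4 + (-2 : k) * hA_7_1 + (3 : k) * hB_0_0 + (1 : k) * hB_1_1 + (2 : k) * hB_1_5 + (-2 : k) * hB_2_6 + (3 : k) * hB_4_4 + (1 : k) * hB_5_5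
  have hq_2_5 : x 2 5 = (0) := by
    linear_combination (-2 : k) * hA_0_4 + (-1 : k) * hA_0_7 + (-2 : k) * hA_1_1 + (-1 : k) * hB_1_0 + (2 : k) * hB_2_4 + (1 : k) * hB_2_7
  have hq_2_6 : x 2 6 = (0) := by
    refine mul_left_cancel₀ hd12 ?_
    linear_combination (-4 : k) * hA_1_6 + (3 : k) * hA_4_4 + (-8 : k) * hA_4_7 + (8 : k) * hA_5_6 + (2 : k) * hA_7_7 + (-6 : k) * hB_0_1 + (6 : k) * hB_0_5 + (2 : k) * hB_1_4 + (-4 : k) * hB_1_7 + (8 : k) * hB_4_6 + (-2 : k) * hB_5_4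
  have hq_2_7 : x 2 7 = (0) := by
    refine mul_left_cancel₀ hd12 ?_
    linear_combination (4 : k) * hA_0_6 + (10 : k) * hA_1_4 + (-3 : k) * hA_5_4 + (8 : k) * hA_7_1 + (3 : k) * hB_0_0 + (5 : k) * hB_1_1 + (-2 : k) * hB_1_5 + (-4 : k) * hB_2_6 + (-3 : k) * hB_4_4 + (-1 : k) * hB_5_5
  have hq_3_0 : x 3 0 = (0) := by
    refine mul_left_cancel₀ hd2 ?_
    linear_combination (1 : k) * hA_0_0
  have hq_3_1 : x 3 1 = (0) := by
    refine mul_left_cancel₀ hd2 ?_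
    linear_combination (1 : k) * hA_1_0 + (-1 : k) * hB_2_5 + (1 : k) * hB_3_4
  have hq_3_2 : x 3 2 = (0) := by
    refine mul_left_cancel₀ hd4 ?_
    linear_combination (4 : k) * hA_0_6 + (-2 : k) * hA_1_4 + (4 : k) * hA_2_0 + (3 : k) * hA_5_4 + (-4 : k) * hA_7_1 + (5 : k) * hB_0_0 + (-1 : k) * hB_1_1 + (2 : k) * hB_1_5 + (-4 : k) * hB_2_6 + (3 : k) * hB_4_4 + (1 : k) * hB_5_5
  have hq_3_3 : x 3 3 = (0) := by
    refine mul_left_cancel₀ hd8 ?_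
    linear_combination (8 : k) * hA_0_3 + (-8 : k) * hA_1_6 + (-1 : k) * hA_4_4 + (-8 : k) * hA_4_7 + (4 : k) * hA_5_6 + (-10 : k) * hB_0_1 + (2 : k) * hB_0_5 + (-2 : k) * hB_1_4 + (-4 : k) * hB_1_7 + (4 : k) * hB_4_6 + (-2 : k) * hB_5_4
  have hq_3_4 : x 3 4 = (0) := by
    refine mul_left_cancel₀ hd2 ?_
    linear_combination (4 : k) * hA_0_4 + (2 : k) * hA_0_7 + (3 : k) * hA_1_1 + (2 : k) * hB_1_0 + (-2 : k) * hB_2_4 + (-2 : k) * hB_2_7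
  have hq_3_5 : x 3 5 = (0) := by
    refine mul_left_cancel₀ hd2 ?_
    linear_combination (-1 : k) * hA_1_0 + (1 : k) * hB_2_5 + (1 : k) * hB_3_4
  have hq_3_6 : x 3 6 = (0) := by
    refine mul_left_cancel₀ hd4 ?_
    linear_combination (2 : k) * hA_1_4 + (-3 : k) * hA_5_4 + (4 : k) * hA_7_1 + (-1 : k) * hB_0_0 + (1 : k) * hB_1_1 + (-2 : k) * hB_1_5 + (4 : k) * hB_2_6 + (-3 : k) * hB_4_4 + (-1 : k) * hB_5_5
  have hq_3_7 : x 3 7 = (0) := by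
    linear_combination (-2 : k) * hA_0_4 + (-1 : k) * hA_0_7 + (-3 : k) * hA_1_1 + (-1 : k) * hB_1_0 + (2 : k) * hB_2_4 + (2 : k) * hB_2_7
  have hq_4_0 : x 4 0 = (0) := by
    linear_combination (2 : k) * hA_0_4 + (2 : k) * hA_0_7 + (3 : k) * hA_1_1 + (1 : k) * hB_1_0 + (-2 : k) * hB_2_4 + (-2 : k) * hB_2_7
  have hq_4_1 : x 4 1 = (0) := by
    refine mul_left_cancel₀ hd12 ?_
    linear_combination (-4 : k) * hA_0_6 + (-10 : k) * hA_1_4 + (3 : k) * hA_5_4 + (4 : k) * hA_7_1 + (-3 : k) * hB_0_0 + (-5 : k) * hB_1_1 + (2 : k) * hB_1_5 + (4 : k) * hB_2_6 + (3 : k) * hB_4_4 + (1 : k) * hB_5_5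
  have hq_4_2 : x 4 2 = (3*x 6 3 + 3*x 4 6 + 2*x 7 6) := by
    linear_combination (1 : k) * hA_2_7 + (-3 : k) * hA_3_5 + (2 : k) * hA_6_4 + (-1 : k) * hA_6_7 + (2 : k) * hB_0_4 + (-1 : k) * hB_0_7 + (2 : k) * hB_1_6
  have hq_4_3 : x 4 3 = (-x 0 7) := by
    linear_combination (1 : k) * hA_3_7
  have hq_4_4 : x 4 4 = (0) := by
    refine mul_left_cancel₀ hd8 ?_
    linear_combination (8 : k) * hA_1_6 + (-1 : k) * hA_4_4 + (8 : k) * hA_4_7 + (-4 : k) * hA_5_6 + (6 : k) * hB_0_1 + (-6 : k) * hB_0_5 + (-2 : k) * hB_1_4 + (4 : k) * hB_1_7 + (-4 : k) * hB_4_6 + (-2 : k) * hB_5_4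
  have hq_4_5 : x 4 5 = (0) := by
    refine mul_left_cancel₀ hd12 ?_
    linear_combination (4 : k) * hA_0_6 + (-2 : k) * hA_1_4 + (3 : k) * hA_5_4 + (-4 : k) * hA_7_1 + (-3 : k) * hB_0_0 + (-1 : k) * hB_1_1 + (-2 : k) * hB_1_5 + (-4 : k) * hB_2_6 + (3 : k) * hB_4_4 + (-7 : k) * hB_5_5
  have hq_4_7 : x 4 7 = (0) := by
    refine mul_left_cancel₀ hd2 ?_
    linear_combination (1 : k) * hA_7_7
  have hq_5_0 : x 5 0 = (0) := by
    refine mul_left_cancel₀ hd4 ?_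
    linear_combination (4 : k) * hA_0_6 + (-2 : k) * hA_1_4 + (3 : k) * hA_5_4 + (-4 : k) * hA_7_1 + (1 : k) * hB_0_0 + (-1 : k) * hB_1_1 + (2 : k) * hB_1_5 + (-4 : k) * hB_2_6 + (3 : k) * hB_4_4 + (1 : k) * hB_5_5
  have hq_5_1 : x 5 1 = (0) := by
    refine mul_left_cancel₀ hd12 ?_
    linear_combination (16 : k) * hA_1_6 + (-3 : k) * hA_4_4 + (8 : k) * hA_4_7 + (-8 : k) * hA_5_6 + (-2 : k) * hA_7_7 + (6 : k) * hB_0_1 + (-6 : k) * hB_0_5 + (-2 : k) * hB_1_4 + (4 : k) * hB_1_7 + (-8 : k) * hB_4_6 + (2 : k) * hB_5_4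
  have hq_5_2 : x 5 2 = (3*x 0 7) := by
    refine mul_left_cancel₀ hd2 ?_
    linear_combination (1 : k) * hA_2_2 + (4 : k) * hA_2_6 + (2 : k) * hA_6_6 + (2 : k) * hB_0_2 + (4 : k) * hB_0_6
  have hq_5_4 : x 5 4 = (-x 7 6) := by
    linear_combination (1 : k) * hA_6_4
  have hq_5_5 : x 5 5 = (0) := by
    refine mul_left_cancel₀ hd24 ?_
    linear_combination (-8 : k) * hA_1_6 + (-9 : k) * hA_4_4 + (8 : k) * hA_4_7 + (4 : k) * hA_5_6 + (4 : k) * hA_7_7 + (6 : k) * hB_0_1 + (-6 : k) * hB_0_5 + (-2 : k) * hB_1_4 + (4 : k) * hB_1_7 + (4 : k) * hB_4_6 + (14 : k) * hB_5_4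
  have hq_5_6 : x 5 6 = (0) := by
    refine mul_left_cancel₀ hd2 ?_
    linear_combination (1 : k) * hA_6_6
  have hq_5_7 : x 5 7 = (-x 4 6) := by
    linear_combination (1 : k) * hA_6_7
  have hq_6_0 : x 6 0 = (0) := by
    refine mul_left_cancel₀ hd2 ?_
    linear_combination (2 : k) * hA_0_5 + (1 : k) * hA_1_0 + (-1 : k) * hB_2_5 + (-1 : k) * hB_3_4
  have hq_6_1 : x 6 1 = (0) := by
    linear_combination (2 : k) * hA_0_4 + (1 : k) * hA_0_7 + (2 : k) * hA_1_1 + (1 : k) * hA_1_5 + (1 : k) * hB_1_0 + (-2 : k) * hB_2_4 + (-1 : k) * hB_2_7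
  have hq_6_2 : x 6 2 = (0) := by
    refine mul_left_cancel₀ hd6 ?_
    linear_combination (-8 : k) * hA_1_6 + (6 : k) * hA_2_5 + (-3 : k) * hA_4_4 + (-4 : k) * hA_4_7 + (4 : k) * hA_5_6 + (1 : k) * hA_7_7 + (-6 : k) * hB_0_1 + (6 : k) * hB_0_5 + (-2 : k) * hB_1_4 + (-2 : k) * hB_1_7 + (4 : k) * hB_4_6 + (2 : k) * hB_5_4
  have hq_6_4 : x 6 4 = (0) := by
    refine mul_left_cancel₀ hd6 ?_
    linear_combination (4 : k) * hA_0_6 + (-2 : k) * hA_1_4 + (9 : k) * hA_5_4 + (-4 : k) * hA_7_1 + (3 : k) * hB_0_0 + (-1 : k) * hB_1_1 + (4 : k) * hB_1_5 + (-4 : k) * hB_2_6 + (3 : k) * hB_4_4 + (-1 : k) * hB_5_5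
  have hq_6_5 : x 6 5 = (0) := by
    refine mul_left_cancel₀ hd2 ?_
    linear_combination (1 : k) * hA_5_5
  have hq_6_6 : x 6 6 = (0) := by
    refine mul_left_cancel₀ hd24 ?_
    linear_combination (8 : k) * hA_1_6 + (9 : k) * hA_4_4 + (-8 : k) * hA_4_7 + (20 : k) * hA_5_6 + (-4 : k) * hA_7_7 + (-6 : k) * hB_0_1 + (6 : k) * hB_0_5 + (2 : k) * hB_1_4 + (-4 : k) * hB_1_7 + (-4 : k) * hB_4_6 + (-14 : k) * hB_5_4
  have hq_6_7 : x 6 7 = (0) := by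
    refine mul_left_cancel₀ hd12 ?_
    linear_combination (-4 : k) * hA_0_6 + (2 : k) * hA_1_4 + (-3 : k) * hA_5_4 + (12 : k) * hA_5_7 + (4 : k) * hA_7_1 + (3 : k) * hB_0_0 + (1 : k) * hB_1_1 + (2 : k) * hB_1_5 + (4 : k) * hB_2_6 + (-3 : k) * hB_4_4 + (7 : k) * hB_5_5
  have hq_7_0 : x 7 0 = (0) := by
    refine mul_left_cancel₀ hd2 ?_
    linear_combination (-2 : k) * hA_0_4 + (-2 : k) * hA_0_7 + (-3 : k) * hA_1_1 + (-2 : k) * hB_1_0 + (2 : k) * hB_2_4 + (2 : k) * hB_2_7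
  have hq_7_1 : x 7 1 = (0) := by
    refine mul_left_cancel₀ hd6 ?_
    linear_combination (-2 : k) * hA_0_6 + (4 : k) * hA_1_4 + (-3 : k) * hA_5_4 + (2 : k) * hA_7_1 + (-3 : k) * hB_0_0 + (-1 : k) * hB_1_1 + (-2 : k) * hB_1_5 + (2 : k) * hB_2_6 + (-3 : k) * hB_4_4 + (-1 : k) * hB_5_5
  have hq_7_2 : x 7 2 = (3*x 6 3 + 2*x 4 6) := by
    linear_combination (1 : k) * hA_2_4 + (-3 : k) * hA_3_5 + (2 : k) * hA_6_4 + (-1 : k) * hA_6_7 + (2 : k) * hB_0_4 + (-1 : k) * hB_0_7 + (1 : k) * hB_1_6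
  have hq_7_3 : x 7 3 = (2*x 0 7) := by
    refine mul_left_cancel₀ hd2 ?_
    linear_combination (1 : k) * hA_2_2 + (2 : k) * hA_2_6 + (2 : k) * hA_3_4 + (1 : k) * hA_6_6 + (2 : k) * hB_0_2 + (2 : k) * hB_0_6
  have hq_7_4 : x 7 4 = (0) := by
    refine mul_left_cancel₀ hd2 ?_
    linear_combination (1 : k) * hA_4_4
  have hq_7_5 : x 7 5 = (0) := by
    refine mul_left_cancel₀ hd6 ?_
    linear_combination (-4 : k) * hA_0_6 + (2 : k) * hA_1_4 + (-3 : k) * hA_5_4 + (4 : k) * hA_7_1 + (-3 : k) * hB_0_0 + (1 : k) * hB_1_1 + (-4 : k) * hB_1_5 + (4 : k) * hB_2_6 + (-3 : k) * hB_4_4 + (1 : k) * hB_5_5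
  have hq_7_7 : x 7 7 = (0) := by
    refine mul_left_cancel₀ hd8 ?_
    linear_combination (-8 : k) * hA_1_6 + (1 : k) * hA_4_4 + (4 : k) * hA_5_6 + (-6 : k) * hB_0_1 + (6 : k) * hB_0_5 + (2 : k) * hB_1_4 + (-4 : k) * hB_1_7 + (4 : k) * hB_4_6 + (2 : k) * hB_5_4
  ext i j
  fin_cases i <;> fin_cases j <;>
    simp [hq_0_0, hq_0_1, hq_0_2, hq_0_3, hq_0_4, hq_0_5, hq_0_6, hq_1_0, hq_1_1, hq_1_2, hq_1_4, hq_1_5, hq_1_6, hq_1_7, hq_2_0, hq_2_1, hq_2_2, hq_2_3, hq_2_4, hq_2_5, hq_2_6, hq_2_7, hq_3_0, hq_3_1, hq_3_2, hq_3_3, hq_3_4, hq_3_5, hq_3_6, hq_3_7, hq_4_0, hq_4_1, hq_4_2, hq_4_3, hq_4_4, hq_4_5, hq_4_7, hq_5_0, hq_5_1, hq_5_2, hq_5_4, hq_5_5, hq_5_6, hq_5_7, hq_6_0, hq_6_1, hq_6_2, hq_6_4, hq_6_5, hq_6_6, hq_6_7, hq_7_0, hq_7_1, hq_7_2, hq_7_3,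 hq_7_4, hq_7_5, hq_7_7,
      CmE00 (k := k), CmE01 (k := k), CmE02 (k := k), CmE03 (k := k), CmE04 (k := k), CmE05 (k := k), CmE06 (k := k), CmE07 (k := k),
      CmE10 (k := k), CmE11 (k := k), CmE12 (k := k), CmE13 (k := k), CmE14 (k := k), CmE15 (k := k), CmE16 (k := k), CmE17 (k := k),
      CmE20 (k := k), CmE21 (k := k), CmE22 (k := k), CmE23 (k := k), CmE24 (k := k), CmE25 (k := k), CmE26 (k := k), CmE27 (k := k),
      CmE30 (k := k), CmE31 (k := k), CmE32 (k := k), CmE33 (k := k), CmE34 (k := k), CmE35 (k := k), CmE36 (k := k), CmE37 (k := k),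
      CmE40 (k := k), CmE41 (k := k), CmE42 (k := k), CmE43 (k := k), CmE44 (k := k), CmE45 (k := k), CmE46 (k := k), CmE47 (k := k),
      CmE50 (k := k), CmE51 (k := k), CmE52 (k := k), CmE53 (k := k), CmE54 (k := k), CmE55 (k := k), CmE56 (k := k), CmE57 (k := k),
      CmE60 (k := k), CmE61 (k := k), CmE62 (k := k), CmE63 (k := k), CmE64 (k := k), CmE65 (k := k), CmE66 (k := k), CmE67 (k := k),
      CmE70 (k := k), CmE71 (k := k), CmE72 (k := k), CmE73 (k := k), CmE74 (k := k), CmE75 (k := k), CmE76 (k := k), CmE77 (k := k)]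

/-- `e ∈ V`, `e` is nilpotent, `λ̌(t) e λ̌(t)⁻¹ = t·e` for all `t ∈ kˣ`,
and the centralizer `{x ∈ so₈(k) : [x,e] = 0}` has dimension 6 over `k`. -/
theorem stmt10 (k : Type*) [Field k] (hch : 23 ≤ ringChar k) :
    emat k ∈ VSet k
    ∧ IsNilpotent (emat k)
    ∧ (∀ t : k, t ≠ 0 → lam k t * emat k * (lam k t)⁻¹ = t • emat k)
    ∧ Module.finrank k
        (so8Sub k ⊓ commSub k (emat k) : Submodule k (Matrix (Fin 8) (Fin 8) k)) = 6 := by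
  refine ⟨⟨?_, ?_⟩, ?_, ?_, ?_⟩
  · -- emat ∈ so8
    ext i j
    fin_cases i <;> fin_cases j <;>
      simp [Matrix.mul_apply, Fin.sum_univ_eight] <;> norm_num
  · -- theta-eigenvalue -1
    ext i j
    fin_cases i <;> fin_cases j <;>
      simp [Matrix.mul_apply, Fin.sum_univ_eight] <;> norm_num
  · -- nilpotent
    refine ⟨5, ?_⟩
    have h2eq : emat k * emat k = E2mat k := by
      ext i j
      fin_cases i <;> fin_cases j <;>
        simp [Matrix.mul_apply, Fin.sum_univ_eight] <;> norm_num
    have h3eq : E2mat k * emat k = E3mat k := by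
      ext i j
      fin_cases i <;> fin_cases j <;>
        simp [Matrix.mul_apply, Fin.sum_univ_eight] <;> norm_num
    have h4eq : E3mat k * emat k = E4mat k := by
      ext i j
      fin_cases i <;> fin_cases j <;>
        simp [Matrix.mul_apply, Fin.sum_univ_eight] <;> norm_num
    have h5eq : E4mat k * emat k = 0 := by
      ext i j
      fin_cases i <;> fin_cases j <;>
        simp [Matrix.mul_apply, Fin.sum_univ_eight] <;> norm_num
    have hpow : emat k ^ 5 = emat k * emat k * emat k * emat k * emat k := by
      rw [pow_succ, pow_succ, pow_succ, pow_succ, pow_one]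
    rw [hpow, h2eq, h3eq, h4eq, h5eq]
  · -- cocharacter conjugation
    intro t ht
    have hinv : lam k t * lam k t⁻¹ = 1 := by
      ext i j
      fin_cases i <;> fin_cases j <;>
        simp [Matrix.mul_apply, Fin.sum_univ_eight] <;> (try field_simp)
    have hR : (lam k t)⁻¹ = lam k t⁻¹ := Matrix.inv_eq_right_inv hinv
    rw [hR]
    ext i j
    fin_cases i <;> fin_cases j <;>
      simp [Matrix.mul_apply, Fin.sum_univ_eight, Matrix.smul_apply, smul_eq_mul] <;>
      (try field_simp) <;> (try ring)
  · -- finrank of centralizer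
    have memC : ∀ a b c u h g : k,
        Cmat k a b c u h g ∈ (so8Sub k ⊓ commSub k (emat k) : Submodule k (Matrix (Fin 8) (Fin 8) k)) :=
      fun a b c u h g => Submodule.mem_inf.mpr
        ⟨by exact Cmat_so8 k a b c u h g, by exact Cmat_comm k a b c u h g⟩
    let eqv : (so8Sub k ⊓ commSub k (emat k) : Submodule k (Matrix (Fin 8) (Fin 8) k)) ≃ₗ[k]
        (Fin 6 → k) :=
      { toFun := fun x => ![x.1 1 3, x.1 5 3, x.1 6 3, x.1 4 6, x.1 0 7, x.1 7 6]
        map_add' := by intro x y; funext i; fin_cases i <;> rfl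
        map_smul' := by intro cc x; funext i; fin_cases i <;> rfl
        invFun := fun v => ⟨Cmat k (v 0) (v 1) (v 2) (v 3) (v 4) (v 5), memC _ _ _ _ _ _⟩
        left_inv := by
          intro x
          obtain ⟨hx1, hx2⟩ := Submodule.mem_inf.mp x.2
          exact Subtype.ext (key k hch x.1 hx1 hx2).symm
        right_inv := by intro v; funext i; fin_cases i <;> rfl }
    rw [eqv.finrank_eq, Module.finrank_fin_fun]

end
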